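/- arXiv:2406.11613 — 4 statements merged into one kernel-verified Lean document; each statement's English description precedes it below -/
import Mathlib

section
/- (No-cloning theorem) For every natural number n with n ≥ 2, there is no unitary matrix U over ℂ indexed by (Fin n × Fin n) together with a unit vector e ∈ EuclideanSpace ℂ (Fin n) such that for every unit vector ψ ∈ EuclideanSpace ℂ (Fin n), U.mulVec (fun (i,j) => ψ i * e j) = fun (i,j) => ψ i * ψ j. In words: no unitary on the two-copy space can copy an arbitrary state ψ onto a fixed reference state e, i.e. there is no U with U(ψ ⊗ e) = ψ ⊗ ψ for all unit ψ. -/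
open scoped InnerProductSpace

/-- **No-cloning theorem**: for `n ≥ 2` there is no unitary on the two-copy
space `ℂ^n ⊗ ℂ^n` together with a unit reference vector `e` that copies every
unit vector `ψ`, i.e. `U (ψ ⊗ e) = ψ ⊗ ψ` for all unit `ψ`. -/
theorem no_cloning (n : ℕ) (hn : 2 ≤ n) :
    ¬ ∃ (U : Matrix.unitaryGroup (Fin n × Fin n) ℂ) (e : EuclideanSpace ℂ (Fin n)),
        ‖e‖ = 1 ∧
        ∀ ψ : EuclideanSpace ℂ (Fin n), ‖ψ‖ = 1 →
          (U : Matrix (Fin n × Fin n) (Fin n × Fin n) ℂ).mulVec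
              (fun p => ψ p.1 * e p.2) = fun p => ψ p.1 * ψ p.2 := by
  rintro ⟨U, e, he, h⟩
  set i0 : Fin n := ⟨0, by omega⟩
  set i1 : Fin n := ⟨1, by omega⟩
  have hne : i0 ≠ i1 := by simp [i0, i1, Fin.ext_iff]
  set ψ0 : EuclideanSpace ℂ (Fin n) := EuclideanSpace.single i0 1
  set ψ1 : EuclideanSpace ℂ (Fin n) := EuclideanSpace.single i1 1
  set c : ℂ := (Real.sqrt 2 : ℂ)⁻¹ with hcdef
  have hc : c ≠ 0 := by
    simp [hcdef]
  set ψ : EuclideanSpace ℂ (Fin n) := c • (ψ0 + ψ1)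
  have hψ0 : ‖ψ0‖ = 1 := by simp [ψ0]
  have hψ1 : ‖ψ1‖ = 1 := by simp [ψ1]
  have horth : ⟪ψ0, ψ1⟫_ℂ = 0 := by
    simp [ψ0, ψ1, EuclideanSpace.inner_single_left, EuclideanSpace.single_apply, Ne.symm hne]
  have hadd : ‖ψ0 + ψ1‖ = Real.sqrt 2 := by
    have := norm_add_sq (𝕜 := ℂ) ψ0 ψ1
    rw [horth] at this
    simp [hψ0, hψ1] at this
    have hsq : ‖ψ0 + ψ1‖ ^ 2 = 2 := by linarith
    nlinarith [Real.sq_sqrt (show (0:ℝ) ≤ 2 by norm_num), Real.sqrt_nonneg 2,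
      norm_nonneg (ψ0 + ψ1)]
  have hψ : ‖ψ‖ = 1 := by
    rw [norm_smul, hadd]
    have h2 : (0:ℝ) < Real.sqrt 2 := by positivity
    rw [hcdef, norm_inv, Complex.norm_real, Real.norm_eq_abs, abs_of_pos h2]
    field_simp
  have h0 := h ψ0 hψ0
  have h1 := h ψ1 hψ1
  have hs := h ψ hψ
  have hfun : (fun p : Fin n × Fin n => ψ p.1 * e p.2)
      = c • (fun p : Fin n × Fin n => ψ0 p.1 * e p.2)
        + c • (fun p : Fin n × Fin n => ψ1 p.1 * e p.2) := by
    funext p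
    simp [ψ, PiLp.smul_apply, PiLp.add_apply, Pi.add_apply, Pi.smul_apply, smul_eq_mul]
    ring
  have key := congrFun hs (i0, i1)
  rw [hfun, Matrix.mulVec_add, Matrix.mulVec_smul, Matrix.mulVec_smul, h0, h1] at key
  simp [Pi.add_apply, Pi.smul_apply, smul_eq_mul, ψ, ψ0, ψ1,
    EuclideanSpace.single_apply, hne, hne.symm, PiLp.smul_apply, PiLp.add_apply] at key
  -- key should now say 0 = c^2 * something
  exact absurd key (by simp [hc])
end

section
/- (Composition of two rotations) For all vectors m, n ∈ ℝ³ and all angles γ, δ ∈ ℝ, the product of rotation gates satisfies R^m(γ) * R^n(δ) = a • I − Complex.I • (v·σ), where a = cos(γ/2)·cos(δ/2) − sin(γ/2)·sin(δ/2)·(m ⋅ n) (with ⋅ the Euclidean dot product) and v = cos(γ/2)·sin(δ/2) • n + sin(γ/2)·cos(δ/2) • m + sin(γ/2)·sin(δ/2) • (m ×₃ n) (with ×₃ the cross product in ℝ³). -/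
/-! The Pauli vectors multiply like quaternions: `(a·σ)(b·σ) = (a ⬝ᵥ b) I + i (a ×₃ b)·σ`.
Expanding `R^m(γ) R^n(δ)` bilinearly, the only product of two Pauli vectors is `(m·σ)(n·σ)`,
and this identity turns it into the `m ⬝ᵥ n` and `m ×₃ n` terms. -/

open Matrix

/-- The Pauli X matrix. -/
noncomputable def X : Matrix (Fin 2) (Fin 2) ℂ := !![0, 1; 1, 0]

/-- The Pauli Y matrix. -/
noncomputable def Y : Matrix (Fin 2) (Fin 2) ℂ := !![0, -Complex.I; Complex.I, 0]

/-- The Pauli Z matrix. -/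
noncomputable def Z : Matrix (Fin 2) (Fin 2) ℂ := !![1, 0; 0, -1]

/-- For `n = (n₁,n₂,n₃) ∈ ℝ³`, the Pauli vector `n·σ = n₁X + n₂Y + n₃Z`. -/
noncomputable def pauliVec (n : Fin 3 → ℝ) : Matrix (Fin 2) (Fin 2) ℂ :=
  (n 0 : ℂ) • X + (n 1 : ℂ) • Y + (n 2 : ℂ) • Z

/-- The rotation gate `R^n(θ) = cos(θ/2)•I − (i·sin(θ/2))•(n·σ)`. -/
noncomputable def rotGate (n : Fin 3 → ℝ) (θ : ℝ) : Matrix (Fin 2) (Fin 2) ℂ :=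
  ((Real.cos (θ / 2) : ℝ) : ℂ) • (1 : Matrix (Fin 2) (Fin 2) ℂ)
    - (Complex.I * ((Real.sin (θ / 2) : ℝ) : ℂ)) • pauliVec n

theorem pauliVec_eq (n : Fin 3 → ℝ) :
    pauliVec n = !![(n 2 : ℂ), n 0 - Complex.I * n 1; n 0 + Complex.I * n 1, -(n 2 : ℂ)] := by
  ext i j
  fin_cases i <;> fin_cases j <;> simp [pauliVec, X, Y, Z] <;> ring

theorem pauliVec_add (m n : Fin 3 → ℝ) : pauliVec (m + n) = pauliVec m + pauliVec n := by
  simp only [pauliVec, Pi.add_apply, Complex.ofReal_add, add_smul]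
  abel

theorem pauliVec_smul (a : ℝ) (n : Fin 3 → ℝ) : pauliVec (a • n) = (a : ℂ) • pauliVec n := by
  simp only [pauliVec, Pi.smul_apply, smul_eq_mul, Complex.ofReal_mul, mul_smul, smul_add]

theorem pauliVec_mul_pauliVec (a b : Fin 3 → ℝ) :
    pauliVec a * pauliVec b = ((a ⬝ᵥ b : ℝ) : ℂ) • 1 + Complex.I • pauliVec (a ⨯₃ b) := by
  simp only [pauliVec_eq, Matrix.mul_fin_two, cross_apply, dotProduct, Fin.sum_univ_three]
  ext i j
  fin_cases i <;> fin_cases j <;> simp <;> grind [Complex.I_sq]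

/-- **Composition of two rotations**:
`R^m(γ) * R^n(δ) = a • I − i • (v·σ)` with
`a = cos(γ/2)cos(δ/2) − sin(γ/2)sin(δ/2)(m⋅n)` and
`v = cos(γ/2)sin(δ/2)•n + sin(γ/2)cos(δ/2)•m + sin(γ/2)sin(δ/2)•(m ×₃ n)`. -/
theorem rotation_composition (m n : Fin 3 → ℝ) (γ δ : ℝ) :
    rotGate m γ * rotGate n δ =
      ((Real.cos (γ / 2) * Real.cos (δ / 2)
          - Real.sin (γ / 2) * Real.sin (δ / 2) * (m ⬝ᵥ n) : ℝ) : ℂ)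
            • (1 : Matrix (Fin 2) (Fin 2) ℂ)
        - Complex.I • pauliVec
            ((Real.cos (γ / 2) * Real.sin (δ / 2)) • n
              + (Real.sin (γ / 2) * Real.cos (δ / 2)) • m
              + (Real.sin (γ / 2) * Real.sin (δ / 2)) • (m ⨯₃ n)) := by
  simp only [rotGate, sub_mul, mul_sub, smul_mul_smul, one_mul, mul_one, pauliVec_mul_pauliVec,
    pauliVec_add, pauliVec_smul]
  match_scalars <;> grind [Complex.I_sq]
end

section
/- (Off-diagonal matrix element in the adiabatic theorem) Let N : ℕ and let H : ℝ → Matrix (Fin N) (Fin N) ℂ, v w : ℝ → EuclideanSpace ℂ (Fin N), and E F : ℝ → ℝ all be differentiable at t ∈ ℝ, with H differentiable in each entry. Suppose H(t) is Hermitian, H(s).mulVec (v s) = E s • v s and H(s).mulVec (w s) = F s • w s for all s in a neighborhood of t, and ⟨v t, w t⟩ = 0. Then ⟨v t, (deriv H t).mulVec (w t)⟩ = (F t − E t) * ⟨v t, deriv w t⟩, where deriv H t is the entrywise derivative. In words: for two instantaneous eigenvector families of a time-dependent Hermitian Hamiltonian belonging to different eigenvalues, the matrix element of dH/dt between them equals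 the energy gap times ⟨n|ṁ⟩. -/
/-!
Differentiating the eigenvalue equation `H w = F w` at `t` gives `Ḣ w + H ẇ = Ḟ w + F ẇ`.
Pairing with `v`, the term `⟨v, H ẇ⟩` equals `E ⟨v, ẇ⟩` because `H t` is Hermitian with
`H v = E v` and `E` is real, while `Ḟ ⟨v, w⟩` vanishes by orthogonality.
-/

open Matrix

namespace Matrix

variable {𝕜 R m n : Type*} [NontriviallyNormedField 𝕜] [NormedRing R] [NormedAlgebra 𝕜 R]
  [Fintype n] {u : 𝕜 → n → R} {u' : n → R} {x : 𝕜}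

theorem hasDerivAt_mulVec {A : 𝕜 → Matrix m n R} {A' : Matrix m n R}
    (hA : ∀ i j, HasDerivAt (fun s => A s i j) (A' i j) x) (hu : HasDerivAt u u' x) :
    HasDerivAt (fun s => A s *ᵥ u s) (A' *ᵥ u x + A x *ᵥ u') x := by
  refine hasDerivAt_pi.2 fun i => ?_
  simp only [Pi.add_apply, mulVec, dotProduct, ← Finset.sum_add_distrib]
  exact HasDerivAt.fun_sum fun j _ => (hA i j).mul (hasDerivAt_pi.1 hu j)

theorem mulVec_add_mulVec_eq_of_eventually_mulVec_eq_smul {A : 𝕜 → Matrix n n R}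
    {A' : Matrix n n R} (hA : ∀ i j, HasDerivAt (fun s => A s i j) (A' i j) x)
    (hu : HasDerivAt u u' x) {c : 𝕜 → R} {c' : R} (hc : HasDerivAt c c' x)
    (heig : ∀ᶠ s in nhds x, A s *ᵥ u s = c s • u s) :
    A' *ᵥ u x + A x *ᵥ u' = c' • u x + c x • u' := by
  refine (hasDerivAt_mulVec hA hu).unique ?_
  rw [add_comm]
  exact (hc.smul hu).congr_of_eventuallyEq heig

theorem IsHermitian.inner_toLp_mulVec_of_mulVec_eq_smul {𝕜 : Type*} [RCLike 𝕜]
    {A : Matrix n n 𝕜} (hA : A.IsHermitian) {v : EuclideanSpace 𝕜 n} {μ : 𝕜}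
    (hv : A *ᵥ v = μ • v) (u : EuclideanSpace 𝕜 n) :
    inner 𝕜 v (WithLp.toLp 2 (A *ᵥ u)) = starRingEnd 𝕜 μ * inner 𝕜 v u := by
  classical
  calc inner 𝕜 v (WithLp.toLp 2 (A *ᵥ u))
      = inner 𝕜 (WithLp.toLp 2 (A *ᵥ v)) u := (isSymmetric_toEuclideanLin_iff.2 hA v u).symm
    _ = inner 𝕜 (μ • v) u := by rw [hv]; rfl
    _ = starRingEnd 𝕜 μ * inner 𝕜 v u := inner_smul_left v u μ

end Matrix

theorem adiabatic_offdiagonal_general (N : ℕ) (H : ℝ → Matrix (Fin N) (Fin N) ℂ)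
    (v w : ℝ → EuclideanSpace ℂ (Fin N)) (E F : ℝ → ℝ) (t : ℝ)
    (hH : ∀ i j, DifferentiableAt ℝ (fun s => H s i j) t)
    (hw : DifferentiableAt ℝ w t)
    (hF : DifferentiableAt ℝ F t)
    (hherm : (H t).IsHermitian)
    (heigv : ∀ᶠ s in nhds t, (H s).mulVec (v s) = (E s : ℂ) • v s)
    (heigw : ∀ᶠ s in nhds t, (H s).mulVec (w s) = (F s : ℂ) • w s)
    (horth : inner (𝕜 := ℂ) (v t) (w t) = 0) :
    inner (𝕜 := ℂ) (v t)
        ((WithLp.toLp 2 ((Matrix.of fun i j => deriv (fun s => H s i j) t).mulVec (w t)) :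
          EuclideanSpace ℂ (Fin N)))
      = ((F t - E t : ℝ) : ℂ) * inner (𝕜 := ℂ) (v t) (deriv w t) := by
  have hw' : HasDerivAt (fun s => (w s).ofLp) (deriv w t).ofLp t :=
    (PiLp.hasFDerivAt_ofLp 2 (w t)).comp_hasDerivAt t hw.hasDerivAt
  have hdiff := congrArg (fun x => inner ℂ (v t) (WithLp.toLp 2 x))
    (mulVec_add_mulVec_eq_of_eventually_mulVec_eq_smul
      (A' := of fun i j => deriv (fun s => H s i j) t) (fun i j => (hH i j).hasDerivAt) hw'
      hF.hasDerivAt.ofReal_comp heigw)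
  simp only [WithLp.toLp_add, WithLp.toLp_smul, WithLp.toLp_ofLp, inner_add_right,
    inner_smul_right, horth, hherm.inner_toLp_mulVec_of_mulVec_eq_smul heigv.self_of_nhds,
    Complex.conj_ofReal] at hdiff
  push_cast
  linear_combination hdiff

/-- **Off-diagonal matrix element in the adiabatic theorem**: for two
instantaneous eigenvector families `v, w` of a time-dependent Hermitian
Hamiltonian `H` with eigenvalues `E, F`, orthogonal at time `t`, the matrix
element of `dH/dt` between them equals the energy gap times `⟨v, ẇ⟩`. -/
theorem adiabatic_offdiagonal (N : ℕ) (H : ℝ → Matrix (Fin N) (Fin N) ℂ)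
    (v w : ℝ → EuclideanSpace ℂ (Fin N)) (E F : ℝ → ℝ) (t : ℝ)
    (hH : ∀ i j, DifferentiableAt ℝ (fun s => H s i j) t)
    (hv : DifferentiableAt ℝ v t) (hw : DifferentiableAt ℝ w t)
    (hE : DifferentiableAt ℝ E t) (hF : DifferentiableAt ℝ F t)
    (hherm : (H t).IsHermitian)
    (heigv : ∀ᶠ s in nhds t, (H s).mulVec (v s) = (E s : ℂ) • v s)
    (heigw : ∀ᶠ s in nhds t, (H s).mulVec (w s) = (F s : ℂ) • w s)
    (horth : inner (𝕜 := ℂ) (v t) (w t) = 0) :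
    inner (𝕜 := ℂ) (v t)
        ((WithLp.toLp 2 ((Matrix.of fun i j => deriv (fun s => H s i j) t).mulVec (w t)) :
          EuclideanSpace ℂ (Fin N)))
      = ((F t - E t : ℝ) : ℂ) * inner (𝕜 := ℂ) (v t) (deriv w t) :=
  adiabatic_offdiagonal_general N H v w E F t hH hw hF hherm heigv heigw horth
end

section
/- (Recoverable channels have scalar Kraus products) Let N ≥ 1 and let E : ι → Matrix (Fin N) (Fin N) ℂ and R : κ → Matrix (Fin N) (Fin N) ℂ be finite families with ∑ k, (R k)ᴴ * (R k) = 1 and ∑ i, (E i)ᴴ * (E i) = 1, and suppose there are scalars α : κ → ι → ℂ with R k * E i = α k i • 1 for all k, i. Then for all i, j: (E i)ᴴ * (E j) = μ i j • 1, where μ i j := ∑ k, (starRingEnd ℂ) (α k i) * α k j; moreover (starRingEnd ℂ) (μ j i) = μ i j, each μ i i is a nonnegative real number, and ∑ i, μ i i = 1. In words: if a trace-preserving recovery map undoes every Kraus operator of a channel up to a scalar, then the products E_i†E_j are scalar multiples of the identity, with coefficients forming a density matrix. -/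
open Matrix

/-- **Recoverable channels have scalar Kraus products**: if a trace-preserving
recovery map `R` undoes every Kraus operator `E i` of a trace-preserving
channel up to a scalar (`R k * E i = α k i • 1`), then `(E i)ᴴ * (E j)` is a
scalar multiple `μ i j` of the identity, where `μ i j = ∑ k, conj (α k i) * α k j`;
moreover `μ` is Hermitian, has nonnegative real diagonal, and unit trace. -/
theorem recoverable_kraus_scalar {ι κ : Type*} [Fintype ι] [Fintype κ]
    (N : ℕ) (hN : 1 ≤ N)
    (E : ι → Matrix (Fin N) (Fin N) ℂ) (R : κ → Matrix (Fin N) (Fin N) ℂ)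
    (hR : ∑ k, (R k)ᴴ * R k = 1) (hE : ∑ i, (E i)ᴴ * E i = 1)
    (α : κ → ι → ℂ)
    (hα : ∀ k i, R k * E i = α k i • (1 : Matrix (Fin N) (Fin N) ℂ)) :
    (∀ i j, (E i)ᴴ * E j
        = (∑ k, (starRingEnd ℂ) (α k i) * α k j) • (1 : Matrix (Fin N) (Fin N) ℂ)) ∧
    (∀ i j, (starRingEnd ℂ) (∑ k, (starRingEnd ℂ) (α k j) * α k i)
        = ∑ k, (starRingEnd ℂ) (α k i) * α k j) ∧
    (∀ i, ∃ r : ℝ, 0 ≤ r ∧ (∑ k, (starRingEnd ℂ) (α k i) * α k i) = (r : ℂ)) ∧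
    (∑ i, ∑ k, (starRingEnd ℂ) (α k i) * α k i) = 1 := by
  have key : ∀ i j, (E i)ᴴ * E j
      = (∑ k, (starRingEnd ℂ) (α k i) * α k j) • (1 : Matrix (Fin N) (Fin N) ℂ) := by
    intro i j
    calc (E i)ᴴ * E j = (E i)ᴴ * (∑ k, (R k)ᴴ * R k) * E j := by rw [hR, Matrix.mul_one]
      _ = ∑ k, (R k * E i)ᴴ * (R k * E j) := by
          rw [Finset.mul_sum, Finset.sum_mul]
          refine Finset.sum_congr rfl fun k _ => ?_
          simp [conjTranspose_mul, Matrix.mul_assoc]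
      _ = ∑ k, ((starRingEnd ℂ) (α k i) * α k j) • (1 : Matrix (Fin N) (Fin N) ℂ) := by
          refine Finset.sum_congr rfl fun k _ => ?_
          rw [hα, hα]
          simp [conjTranspose_smul, smul_smul, mul_comm]
      _ = (∑ k, (starRingEnd ℂ) (α k i) * α k j) • (1 : Matrix (Fin N) (Fin N) ℂ) := by
          rw [Finset.sum_smul]
  refine ⟨key, ?_, ?_, ?_⟩
  · intro i j
    simp [map_sum, mul_comm]
  · intro i
    refine ⟨(∑ k, Complex.normSq (α k i)), ?_, ?_⟩
    · exact Finset.sum_nonneg fun k _ => Complex.normSq_nonneg _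
    · push_cast
      exact Finset.sum_congr rfl fun k _ => (Complex.normSq_eq_conj_mul_self (z := α k i)).symm
  · have h : ∑ i, (∑ k, (starRingEnd ℂ) (α k i) * α k i) • (1 : Matrix (Fin N) (Fin N) ℂ)
        = 1 := by
      have h' : ∑ i, (∑ k, (starRingEnd ℂ) (α k i) * α k i) • (1 : Matrix (Fin N) (Fin N) ℂ)
          = ∑ i, (E i)ᴴ * E i := Finset.sum_congr rfl fun i _ => (key i i).symm
      rw [h', hE]
    have := congrFun (congrFun h (⟨0, Nat.lt_of_lt_of_le Nat.zero_lt_one hN⟩ : Fin N))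
      (⟨0, Nat.lt_of_lt_of_le Nat.zero_lt_one hN⟩ : Fin N)
    simpa [Matrix.sum_apply, Matrix.one_apply] using this
end
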